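/- arXiv:1108.6272 — 6 statements merged into one kernel-verified Lean document; each statement's English description precedes it below -/
import Mathlib

section
/- Let σ > 0 and let g : ℝ → ℂ be a Schwartz function whose Fourier transform ĝ has support contained in the open interval (−σ, σ). Then 2·ĝ(0) − g(0) = 2·∫_{−∞}^{∞} g(y)·(1 − sin(2πσy)/(2πy)) dy, where the integrand is interpreted by its limiting value 1 − σ·g(0)-factor at y = 0 (i.e. sin(2πσy)/(2πy) is extended continuously by the value σ at y = 0). -/
/-!
Let `h` be the indicator of `(-σ, σ)`, so that `𝓕 h y = 2 sin(2πσy)/(2πy)`. Since `ĝ` vanishes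
off `(-σ, σ)`, we have `ĝ = ĝ h`, hence by self-adjointness of the Fourier transform and Fourier
inversion `∫ g · 𝓕 h = ∫ ĝ h = ∫ ĝ = g(0)`. The identity follows by subtracting this from
`2 ∫ g = 2 ĝ(0)`.
-/

open MeasureTheory FourierTransform Real Complex

section InnerProductSpace

variable {V : Type*} [NormedAddCommGroup V] [InnerProductSpace ℝ V] [FiniteDimensional ℝ V]
  [MeasurableSpace V] [BorelSpace V]

theorem Real.fourier_apply_zero (f : V → ℂ) : 𝓕 f 0 = ∫ x, f x := by
  simp [Real.fourier_eq]

theorem Real.integral_fourier_eq_apply_zero {f : V → ℂ} (hf : Integrable f)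
    (hFf : Integrable (𝓕 f)) (h0 : ContinuousAt f 0) : ∫ ξ, 𝓕 f ξ = f 0 := by
  rw [← hf.fourierInv_fourier_eq hFf h0, Real.fourierInv_eq]
  simp

theorem Real.integral_fourier_mul_eq {f g : V → ℂ} (hf : Integrable f) (hg : Integrable g) :
    ∫ ξ, 𝓕 f ξ * g ξ = ∫ x, f x * 𝓕 g x := by
  have := VectorFourier.integral_fourierIntegral_smul_eq_flip (L := innerₗ V)
    Real.continuous_fourierChar continuous_inner hf hg
  rwa [flip_innerₗ] at this

theorem MeasureTheory.Integrable.mul_fourier {f g : V → ℂ} (hf : Integrable f)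
    (hg : Integrable g) : Integrable fun x ↦ f x * 𝓕 g x :=
  hf.mul_bdd
    (VectorFourier.fourierIntegral_continuous Real.continuous_fourierChar continuous_inner hg
      ).aestronglyMeasurable
    (.of_forall fun _ ↦ VectorFourier.norm_fourierIntegral_le_integral_norm _ _ _ _ _)

theorem Real.integral_mul_fourier_eq_apply_zero_of_eqOn_one {f φ : V → ℂ} {s : Set V}
    (hf : Integrable f) (hFf : Integrable (𝓕 f)) (h0 : ContinuousAt f 0) (hφ : Integrable φ)
    (hsupp : Function.support (𝓕 f) ⊆ s) (hφs : Set.EqOn φ 1 s) :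
    ∫ x, f x * 𝓕 φ x = f 0 := by
  rw [← Real.integral_fourier_mul_eq hf hφ, ← Real.integral_fourier_eq_apply_zero hf hFf h0]
  congr with ξ
  by_cases hξ : 𝓕 f ξ = 0
  · simp [hξ]
  · rw [hφs (hsupp hξ), Pi.one_apply, mul_one]

end InnerProductSpace

theorem Real.fourier_indicator_Ioo_eq_intervalIntegral {a b : ℝ} (hab : a ≤ b) (y : ℝ) :
    𝓕 ((Set.Ioo a b).indicator (1 : ℝ → ℂ)) y =
      ∫ v in a..b, Complex.exp (-(2 * π * y * I) * v) := by
  rw [Real.fourier_real_eq_integral_exp_smul, intervalIntegral.integral_of_le hab,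
    integral_Ioc_eq_integral_Ioo, ← integral_indicator measurableSet_Ioo]
  congr with v
  by_cases hv : v ∈ Set.Ioo a b
  · simp only [Set.indicator_of_mem hv, Pi.one_apply, smul_eq_mul, mul_one]
    congr 1
    push_cast
    ring
  · simp [hv]

theorem Real.fourier_indicator_Ioo_neg_self {σ : ℝ} (hσ : 0 ≤ σ) (y : ℝ) :
    𝓕 ((Set.Ioo (-σ) σ).indicator (1 : ℝ → ℂ)) y =
      2 * ((if y = 0 then σ else Real.sin (2 * π * σ * y) / (2 * π * y) : ℝ) : ℂ) := by
  rw [Real.fourier_indicator_Ioo_eq_intervalIntegral (by linarith)]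
  split_ifs with hy
  · simp only [hy, ofReal_zero, mul_zero, zero_mul, neg_zero, Complex.exp_zero,
      intervalIntegral.integral_const, sub_neg_eq_add, Complex.real_smul, mul_one]
    push_cast
    ring
  · have hc : -(2 * π * y * I) ≠ 0 := by simp [hy, pi_ne_zero, I_ne_zero]
    have hyC : (y : ℂ) ≠ 0 := ofReal_ne_zero.2 hy
    have hπC : (π : ℂ) ≠ 0 := ofReal_ne_zero.2 pi_ne_zero
    rw [integral_exp_mul_complex hc]
    push_cast
    rw [Complex.sin]
    field_simp
    ring_nf
    simp only [I_sq]
    ring_nf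

/-- If `g` is a Schwartz function on `ℝ` whose Fourier transform is
supported in `(-σ, σ)`, then `2·ĝ(0) − g(0) = 2·∫ g(y)·(1 − sin(2πσy)/(2πy)) dy`,
where `sin(2πσy)/(2πy)` is extended by its limiting value `σ` at `y = 0`. -/
theorem two_ghat_zero_sub_g_zero (σ : ℝ) (hσ : 0 < σ) (g : SchwartzMap ℝ ℂ)
    (hsupp : Function.support (FourierTransform.fourier (g : ℝ → ℂ)) ⊆ Set.Ioo (-σ) σ) :
    2 * FourierTransform.fourier (g : ℝ → ℂ) 0 - g 0 =
      2 * ∫ y : ℝ, g y *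
        (1 - ((if y = 0 then σ
               else Real.sin (2 * Real.pi * σ * y) / (2 * Real.pi * y) : ℝ) : ℂ)) := by
  set h := (Set.Ioo (-σ) σ).indicator (1 : ℝ → ℂ)
  have hh : Integrable h := (integrable_indicator_iff measurableSet_Ioo).2
    (integrableOn_const measure_Ioo_lt_top.ne)
  have hgh : ∫ y, g y * 𝓕 h y = g 0 :=
    Real.integral_mul_fourier_eq_apply_zero_of_eqOn_one g.integrable (𝓕 g).integrable
      g.continuous.continuousAt hh hsupp fun _ hx ↦ Set.indicator_of_mem hx _
  have hkernel (y : ℝ) : g y * (1 - ((if y = 0 then σ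
      else Real.sin (2 * Real.pi * σ * y) / (2 * Real.pi * y) : ℝ) : ℂ)) =
      g y - g y * 𝓕 h y / 2 := by
    rw [Real.fourier_indicator_Ioo_neg_self hσ.le]
    ring
  simp_rw [hkernel]
  rw [integral_sub g.integrable ((g.integrable.mul_fourier hh).div_const 2), integral_div, hgh,
    Real.fourier_apply_zero]
  ring
end

section
/- There exists a constant C > 0 such that for every prime p and every real number X ≥ 1, the number of fundamental discriminants f with 0 < |f| ≤ X and p | f satisfies |#{f : f is a fundamental discriminant, 0 < |f| ≤ X, p | f} − 6X/(π²(p+1))| ≤ C·(X/p)^{1/2}. -/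
/-- An integer `f` is a fundamental discriminant if either `f ≡ 1 (mod 4)` and `f` is
squarefree, or `f = 4m` with `m` squarefree and `m ≡ 2` or `3 (mod 4)`. -/
def IsFundamentalDiscriminant (f : ℤ) : Prop :=
  (f % 4 = 1 ∧ Squarefree f) ∨
  (∃ m : ℤ, f = 4 * m ∧ Squarefree m ∧ (m % 4 = 2 ∨ m % 4 = 3))

/-!
Via `f ↦ |f|`, odd fundamental discriminants correspond to odd squarefree `n` (the sign is fixed
by `f ≡ 1 (mod 4)`), and even ones are `4m` with `m` squarefree: both signs when `m` is even, one
sign when `m` is odd. For odd `p` the count is thus `A(X/p) + 2A(X/8p) + A(X/4p)`, where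
`A(Z)` counts the squarefree `n ≤ Z` prime to `2p`; for `p = 2` it is `2A(X/8) + A(X/4)` with `A`
counting odd squarefree `n`.

There are `(6/π²)Z + O(√Z)` squarefree `n ≤ Z`, by Möbius inversion of `∑_{d² ∣ n} μ(d)`.
Passing to `n` prime to a further prime `k` uses the identity `A_{qk}(Z) + A_{qk}(Z/k) = A_q(Z)`
(split by whether `k ∣ n` and divide out `k`): if `A_q(Z) = cZ + O(√Z)`, iterating it forces
`A_{qk}(Z) = (k/(k+1))cZ + O(√Z)`.
-/

open ArithmeticFunction Finset Real
open scoped ArithmeticFunction.Moebius ArithmeticFunction.zeta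

lemma abs_moebius_div_sq_le (d : ℕ) : |(μ d : ℝ) / (d : ℝ) ^ 2| ≤ 1 / (d : ℝ) ^ 2 := by
  rw [abs_div, abs_of_nonneg (sq_nonneg (d : ℝ))]
  exact div_le_div_of_nonneg_right (mod_cast abs_moebius_le_one) (sq_nonneg _)

lemma summable_moebius_div_sq : Summable fun d : ℕ ↦ (μ d : ℝ) / (d : ℝ) ^ 2 :=
  .of_norm_bounded (Real.summable_one_div_nat_pow.mpr one_lt_two) abs_moebius_div_sq_le

/-- The sum is `1/ζ(2)`, since `L(μ, s) ζ(s) = 1`. -/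
lemma tsum_moebius_div_sq : ∑' d : ℕ, (μ d : ℝ) / (d : ℝ) ^ 2 = 6 / π ^ 2 := by
  set S := ∑' d : ℕ, (μ d : ℝ) / (d : ℝ) ^ 2
  have h2 : 1 < (2 : ℂ).re := by norm_num
  have hζμ := LSeries_zeta_mul_Lseries_moebius h2
  rw [LSeries_zeta_eq_riemannZeta h2, riemannZeta_two] at hζμ
  have hμ : LSeries (fun n ↦ ((μ n : ℤ) : ℂ)) 2 = (S : ℂ) := by
    rw [Complex.ofReal_tsum]
    refine tsum_congr fun n ↦ ?_
    rcases eq_or_ne n 0 with rfl | hn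
    · simp
    · rw [LSeries.term_of_ne_zero hn, show (2 : ℂ) = (2 : ℕ) by norm_num, Complex.cpow_natCast]
      push_cast
      ring
  rw [hμ] at hζμ
  have hπ : (π : ℂ) ≠ 0 := by exact_mod_cast pi_ne_zero
  have : (S : ℂ) = ((6 / π ^ 2 : ℝ) : ℂ) := by
    push_cast
    field_simp at hζμ ⊢
    linear_combination hζμ
  exact_mod_cast this

lemma abs_sum_moebius_div_sq_sub_le (K : ℕ) :
    |∑ d ∈ Ioc 0 K, (μ d : ℝ) / (d : ℝ) ^ 2 - 6 / π ^ 2| ≤ 2 / ((K : ℝ) + 1) := by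
  have hrange : ∑ d ∈ range (K + 1), (μ d : ℝ) / (d : ℝ) ^ 2 =
      ∑ d ∈ Ioc 0 K, (μ d : ℝ) / (d : ℝ) ^ 2 := by
    rw [Nat.range_succ_eq_Icc_zero, Icc_eq_cons_Ioc (Nat.zero_le _), sum_cons]
    simp
  rw [← hrange, ← tsum_moebius_div_sq, ← summable_moebius_div_sq.sum_add_tsum_nat_add (K + 1),
    sub_add_cancel_left, abs_neg]
  have htail : Summable fun i : ℕ ↦ 1 / ((i + (K + 1) : ℕ) : ℝ) ^ 2 :=
    (Real.summable_one_div_nat_pow.mpr one_lt_two).comp_injective (add_left_injective _)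
  calc |∑' i, (μ (i + (K + 1)) : ℝ) / ((i + (K + 1) : ℕ) : ℝ) ^ 2|
      ≤ ∑' i : ℕ, 1 / ((i + (K + 1) : ℕ) : ℝ) ^ 2 :=
        (norm_eq_abs _).symm.trans_le <| tsum_of_norm_bounded htail.hasSum fun i ↦
          (norm_eq_abs _).trans_le (abs_moebius_div_sq_le (i + (K + 1)))
    _ ≤ 2 / ((K : ℝ) + 1) := by
        refine htail.tsum_le_of_sum_range_le fun M ↦ ?_
        have := sum_Ioo_inv_sq_le (α := ℝ) K (K + 1 + M)
        rw [← Ico_add_one_left_eq_Ioo, sum_Ico_eq_sum_range, Nat.add_sub_cancel_left] at this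
        simpa [one_div, add_comm] using this

lemma dvd_of_sq_dvd_sq_mul {a b d : ℕ} (ha : Squarefree a) (h : d ^ 2 ∣ b ^ 2 * a) :
    d ∣ b := by
  rcases eq_or_ne b 0 with rfl | hb
  · exact dvd_zero d
  rcases eq_or_ne d 0 with rfl | hd
  · simp [hb, ha.ne_zero] at h
  rw [← Nat.factorization_le_iff_dvd hd hb]
  rw [← Nat.factorization_le_iff_dvd (by positivity) (by simp [hb, ha.ne_zero])] at h
  intro q
  have hq := h q
  have ha1 := (Nat.squarefree_iff_factorization_le_one ha.ne_zero).mp ha q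
  simp only [Nat.factorization_mul (pow_ne_zero 2 hb) ha.ne_zero, Nat.factorization_pow,
    Finsupp.add_apply, Finsupp.smul_apply, smul_eq_mul] at hq
  omega

/-- Writing `n = b²a` with `a` squarefree, the `d` with `d² ∣ n` are the divisors of `b`. -/
lemma sum_moebius_of_sq_dvd {n N : ℕ} (hn : n ≠ 0) (hnN : n ≤ N) :
    ∑ d ∈ Ioc 0 N.sqrt with d ^ 2 ∣ n, μ d = if Squarefree n then 1 else 0 := by
  obtain ⟨a, b, rfl, ha⟩ := Nat.sq_mul_squarefree n
  have hb : b ≠ 0 := by rintro rfl; simp at hn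
  have hdiv : {d ∈ Ioc 0 N.sqrt | d ^ 2 ∣ b ^ 2 * a} = b.divisors := by
    ext d
    simp only [mem_filter, mem_Ioc, Nat.mem_divisors, and_iff_left hb]
    refine ⟨fun h ↦ dvd_of_sq_dvd_sq_mul ha h.2, fun hd ↦ ?_⟩
    have hd2 : d ^ 2 ∣ b ^ 2 * a := (pow_dvd_pow_of_dvd hd 2).mul_right a
    exact ⟨⟨Nat.pos_of_dvd_of_pos hd (Nat.pos_of_ne_zero hb),
      Nat.le_sqrt'.mpr ((Nat.le_of_dvd (Nat.pos_of_ne_zero hn) hd2).trans hnN)⟩, hd2⟩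
  have hsf : Squarefree (b ^ 2 * a) ↔ b = 1 := by
    refine ⟨fun h ↦ Nat.isUnit_iff.mp (h b ⟨a, by ring⟩), ?_⟩
    rintro rfl
    simpa using ha
  rw [hdiv, ← coe_mul_zeta_apply, moebius_mul_coe_zeta, one_apply]
  simp only [hsf]

lemma card_squarefree_eq_sum_moebius (N : ℕ) :
    (#{n ∈ Ioc 0 N | Squarefree n} : ℤ) = ∑ d ∈ Ioc 0 N.sqrt, μ d * (N / d ^ 2 : ℕ) := by
  rw [card_filter, Nat.cast_sum]
  calc ∑ n ∈ Ioc 0 N, ((if Squarefree n then 1 else 0 : ℕ) : ℤ)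
      = ∑ n ∈ Ioc 0 N, ∑ d ∈ Ioc 0 N.sqrt, if d ^ 2 ∣ n then μ d else 0 := by
        refine sum_congr rfl fun n hn ↦ ?_
        rw [mem_Ioc] at hn
        rw [← sum_filter, sum_moebius_of_sq_dvd hn.1.ne' hn.2]
        split_ifs <;> rfl
    _ = ∑ d ∈ Ioc 0 N.sqrt, μ d * (N / d ^ 2 : ℕ) := by
        rw [sum_comm]
        refine sum_congr rfl fun d _ ↦ ?_
        rw [← sum_filter, sum_const, Nat.Ioc_filter_dvd_card_eq_div, nsmul_eq_mul, mul_comm]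

lemma abs_natCast_div_sub_le_one (a b : ℕ) : |((a / b : ℕ) : ℝ) - a / b| ≤ 1 := by
  rw [← Nat.floor_div_eq_div (K := ℝ), abs_le]
  have h0 : (0 : ℝ) ≤ a / b := by positivity
  constructor <;> linarith [Nat.floor_le h0, Nat.lt_floor_add_one ((a : ℝ) / b)]

lemma abs_card_squarefree_sub_mul_sum_le (N : ℕ) :
    |(#{n ∈ Ioc 0 N | Squarefree n} : ℝ) -
      N * ∑ d ∈ Ioc 0 N.sqrt, (μ d : ℝ) / (d : ℝ) ^ 2| ≤ N.sqrt := by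
  have hcard : (#{n ∈ Ioc 0 N | Squarefree n} : ℝ) =
      ∑ d ∈ Ioc 0 N.sqrt, (μ d : ℝ) * (N / d ^ 2 : ℕ) := by
    have := congrArg (Int.cast : ℤ → ℝ) (card_squarefree_eq_sum_moebius N)
    push_cast at this
    exact this
  rw [hcard, mul_sum, ← sum_sub_distrib]
  refine (abs_sum_le_sum_abs _ _).trans ?_
  calc ∑ d ∈ Ioc 0 N.sqrt, |(μ d : ℝ) * (N / d ^ 2 : ℕ) - N * ((μ d : ℝ) / (d : ℝ) ^ 2)|
      ≤ ∑ d ∈ Ioc 0 N.sqrt, (1 : ℝ) := by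
        refine sum_le_sum fun d _ ↦ ?_
        rw [show (μ d : ℝ) * (N / d ^ 2 : ℕ) - N * ((μ d : ℝ) / (d : ℝ) ^ 2) =
            μ d * (((N / d ^ 2 : ℕ) : ℝ) - N / ((d ^ 2 : ℕ) : ℝ)) by push_cast; ring,
          abs_mul]
        exact mul_le_one₀ (mod_cast abs_moebius_le_one) (abs_nonneg _)
          (abs_natCast_div_sub_le_one N (d ^ 2))
    _ = N.sqrt := by simp

lemma abs_card_squarefree_sub_le (N : ℕ) :
    |(#{n ∈ Ioc 0 N | Squarefree n} : ℝ) - 6 / π ^ 2 * N| ≤ 3 * √N := by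
  set K := N.sqrt
  have hK : (K : ℝ) ≤ √N := Real.le_sqrt_of_sq_le (mod_cast Nat.sqrt_le' N)
  have hK' : √N ≤ K + 1 :=
    Real.sqrt_le_iff.mpr ⟨by positivity, by exact_mod_cast (Nat.lt_succ_sqrt' N).le⟩
  have htail :
      |N * ∑ d ∈ Ioc 0 K, (μ d : ℝ) / (d : ℝ) ^ 2 - 6 / π ^ 2 * N| ≤ 2 * √N := by
    rw [mul_comm (6 / π ^ 2), ← mul_sub, abs_mul, Nat.abs_cast]
    calc (N : ℝ) * |∑ d ∈ Ioc 0 K, (μ d : ℝ) / (d : ℝ) ^ 2 - 6 / π ^ 2|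
        ≤ N * (2 / (K + 1)) := by gcongr; exact abs_sum_moebius_div_sq_sub_le K
      _ ≤ 2 * √N := by
        rw [mul_div_assoc', div_le_iff₀ (by positivity)]
        nlinarith [Real.mul_self_sqrt (Nat.cast_nonneg (α := ℝ) N), Real.sqrt_nonneg N]
  calc _ ≤ _ := abs_sub_le _ (N * ∑ d ∈ Ioc 0 K, (μ d : ℝ) / (d : ℝ) ^ 2) _
    _ ≤ 3 * √N := by linarith [abs_card_squarefree_sub_mul_sum_le N]

open Classical in
noncomputable def upTo (P : ℕ → Prop) (Z : ℝ) : Finset ℕ := {n ∈ Ioc 0 ⌊Z⌋₊ | P n}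

lemma mem_upTo {P : ℕ → Prop} {Z : ℝ} {n : ℕ} :
    n ∈ upTo P Z ↔ 0 < n ∧ (n : ℝ) ≤ Z ∧ P n := by
  simp only [upTo, mem_filter, mem_Ioc, and_assoc]
  exact and_congr_right fun hn ↦ and_congr_left' (Nat.le_floor_iff' hn.ne')

lemma upTo_congr {P Q : ℕ → Prop} (h : ∀ n, 0 < n → (P n ↔ Q n)) (Z : ℝ) :
    upTo P Z = upTo Q Z := by
  ext n
  simp only [mem_upTo]
  exact and_congr_right fun hn ↦ and_congr_right' (h n hn)

lemma upTo_of_lt_one (P : ℕ → Prop) {Z : ℝ} (hZ : Z < 1) : upTo P Z = ∅ := by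
  ext n
  simp only [mem_upTo, Finset.notMem_empty, iff_false]
  rintro ⟨hn, hnZ, -⟩
  have : (1 : ℝ) ≤ n := mod_cast hn
  linarith

lemma card_upTo_and_add_card_upTo_and_not (P R : ℕ → Prop) (Z : ℝ) :
    #(upTo (fun n ↦ P n ∧ R n) Z) + #(upTo (fun n ↦ P n ∧ ¬ R n) Z) = #(upTo P Z) := by
  rw [← card_union_of_disjoint]
  · congr 1
    ext n
    simp only [mem_union, mem_upTo]
    tauto
  · rw [disjoint_left]
    intro n h h'
    exact (mem_upTo.mp h').2.2.2 (mem_upTo.mp h).2.2.2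

lemma card_upTo_and_dvd (P : ℕ → Prop) {k : ℕ} (hk : 0 < k) (Z : ℝ) :
    #(upTo (fun n ↦ P n ∧ k ∣ n) Z) = #(upTo (fun u ↦ P (k * u)) (Z / k)) := by
  have hk' : (0 : ℝ) < k := mod_cast hk
  refine card_nbij' (· / k) (k * ·) ?_ ?_ ?_ ?_
  · rintro n hn
    obtain ⟨hn, hnZ, hP, u, rfl⟩ := mem_upTo.mp hn
    simp only [mem_coe, mem_upTo, Nat.mul_div_cancel_left u hk]
    rw [le_div_iff₀ hk', mul_comm]
    exact ⟨Nat.pos_of_mul_pos_left hn, by exact_mod_cast hnZ, hP⟩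
  · rintro u hu
    obtain ⟨hu, huZ, hP⟩ := mem_upTo.mp hu
    rw [le_div_iff₀ hk', mul_comm] at huZ
    exact mem_upTo.mpr ⟨Nat.mul_pos hk hu, by exact_mod_cast huZ, hP, dvd_mul_right k u⟩
  · rintro n hn
    exact Nat.mul_div_cancel' (mem_upTo.mp hn).2.2.2
  · rintro u -
    exact Nat.mul_div_cancel_left u hk

/-- Induction on `N` with `Z < 2ᴺ`: since `k ≥ 2`, the error `C√Z + 4C√(Z/k)` is at most
`(1 + 4/√2)C√Z ≤ 4C√Z`. -/
lemma abs_sub_le_of_add_comp_div {f g : ℝ → ℝ} {k c C : ℝ} (hk : 2 ≤ k) (hc : 0 ≤ c)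
    (hcC : c ≤ C) (hadd : ∀ Z, f Z + f (Z / k) = g Z) (hf : ∀ Z, Z < 1 → f Z = 0)
    (hg : ∀ Z, 0 ≤ Z → |g Z - c * Z| ≤ C * √Z) {Z : ℝ} (hZ : 0 ≤ Z) :
    |f Z - c * k / (k + 1) * Z| ≤ 4 * C * √Z := by
  have hk0 : 0 < k := by linarith
  have hbc : c * k / (k + 1) ≤ c := by
    rw [div_le_iff₀ (by linarith)]
    nlinarith
  have hsqrt2 : 4 / √2 ≤ 3 := by
    rw [div_le_iff₀ (by positivity)]
    nlinarith [Real.sq_sqrt (zero_le_two (α := ℝ)), Real.sqrt_nonneg 2]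
  suffices ∀ N : ℕ, ∀ Z, 0 ≤ Z → Z < 2 ^ N →
      |f Z - c * k / (k + 1) * Z| ≤ 4 * C * √Z by
    obtain ⟨N, hN⟩ := pow_unbounded_of_one_lt Z one_lt_two
    exact this N Z hZ hN
  intro N
  induction N with
  | zero =>
    intro Z hZ hZ1
    rw [pow_zero] at hZ1
    rw [hf Z hZ1, zero_sub, abs_neg, abs_of_nonneg (by positivity)]
    have : Z ≤ √Z := Real.le_sqrt_self_iff.mpr hZ1.le
    nlinarith [Real.sqrt_nonneg Z]
  | succ N ih =>
    intro Z hZ hZN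
    have hZk : Z / k < 2 ^ N := by
      rw [div_lt_iff₀ hk0]
      rw [pow_succ] at hZN
      nlinarith [pow_pos (two_pos (α := ℝ)) N]
    have hrec := ih (Z / k) (by positivity) hZk
    have hsqrt : √(Z / k) ≤ √Z / √2 := by
      rw [Real.sqrt_div hZ]
      gcongr
    have hC : 0 ≤ C * √Z := by nlinarith [Real.sqrt_nonneg Z]
    calc |f Z - c * k / (k + 1) * Z|
        = |(g Z - c * Z) - (f (Z / k) - c * k / (k + 1) * (Z / k))| := by
          rw [← hadd Z]
          congr 1
          field_simp
          ring
      _ ≤ C * √Z + 4 * C * √(Z / k) := (abs_sub _ _).trans (add_le_add (hg Z hZ) hrec)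
      _ ≤ C * √Z + 4 * C * (√Z / √2) := by gcongr; linarith
      _ = C * √Z + 4 / √2 * (C * √Z) := by ring
      _ ≤ 4 * C * √Z := by nlinarith

lemma six_div_pi_sq_le_one : 6 / π ^ 2 ≤ 1 := by
  rw [div_le_one (by positivity)]
  nlinarith [pi_gt_three]

lemma sub_floor_le_sqrt (Z : ℝ) : Z - ⌊Z⌋₊ ≤ √Z := by
  rcases le_total Z 1 with hZ1 | hZ1
  · linarith [Real.le_sqrt_self_iff.mpr hZ1, (Nat.cast_nonneg ⌊Z⌋₊ : (0 : ℝ) ≤ _)]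
  · linarith [Real.one_le_sqrt.mpr hZ1, Nat.lt_floor_add_one Z]

noncomputable def squarefreeCoprimeUpTo (q : ℕ) (Z : ℝ) : Finset ℕ :=
  upTo (fun n ↦ Squarefree n ∧ n.Coprime q) Z

lemma abs_card_squarefreeCoprimeUpTo_one_sub_le {Z : ℝ} (hZ : 0 ≤ Z) :
    |(#(squarefreeCoprimeUpTo 1 Z) : ℝ) - 6 / π ^ 2 * Z| ≤ 4 * √Z := by
  set N := ⌊Z⌋₊
  have hcard : #(squarefreeCoprimeUpTo 1 Z) = #{n ∈ Ioc 0 N | Squarefree n} := by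
    simp only [squarefreeCoprimeUpTo, upTo, Nat.coprime_one_right_eq_true, and_true]
    congr
  have hN : |6 / π ^ 2 * (N : ℝ) - 6 / π ^ 2 * Z| ≤ √Z := by
    rw [← mul_sub, abs_mul, abs_of_nonneg (by positivity), abs_sub_comm,
      abs_of_nonneg (sub_nonneg.mpr (Nat.floor_le hZ))]
    exact (mul_le_of_le_one_left (sub_nonneg.mpr (Nat.floor_le hZ)) six_div_pi_sq_le_one).trans
      (sub_floor_le_sqrt Z)
  have hsqrt : √(N : ℝ) ≤ √Z := Real.sqrt_le_sqrt (Nat.floor_le hZ)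
  rw [hcard]
  calc _ ≤ _ := abs_sub_le _ (6 / π ^ 2 * (N : ℝ)) _
    _ ≤ 4 * √Z := by linarith [abs_card_squarefree_sub_le N]

lemma card_upTo_squarefree_coprime_dvd {k q : ℕ} (hk : Squarefree k) (hkq : k.Coprime q)
    (Z : ℝ) : #(upTo (fun n ↦ (Squarefree n ∧ n.Coprime q) ∧ k ∣ n) Z) =
      #(squarefreeCoprimeUpTo (q * k) (Z / k)) := by
  rw [card_upTo_and_dvd _ (Nat.pos_of_ne_zero hk.ne_zero), squarefreeCoprimeUpTo]
  congr 1
  refine upTo_congr (fun u _ ↦ ?_) _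
  rw [Nat.squarefree_mul_iff, Nat.coprime_mul_iff_left, Nat.coprime_mul_iff_right,
    Nat.coprime_comm (n := k)]
  tauto

lemma card_squarefreeCoprimeUpTo_mul_add_div {k q : ℕ} (hk : k.Prime) (hkq : ¬ k ∣ q)
    (Z : ℝ) : #(squarefreeCoprimeUpTo (q * k) Z) + #(squarefreeCoprimeUpTo (q * k) (Z / k)) =
      #(squarefreeCoprimeUpTo q Z) := by
  have hsplit :=
    card_upTo_and_add_card_upTo_and_not (fun n ↦ Squarefree n ∧ n.Coprime q) (k ∣ ·) Z
  rw [card_upTo_squarefree_coprime_dvd hk.squarefree ((hk.coprime_iff_not_dvd).mpr hkq)] at hsplit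
  unfold squarefreeCoprimeUpTo at hsplit ⊢
  rw [← hsplit, add_comm]
  congr 2
  refine upTo_congr (fun n _ ↦ ?_) _
  rw [Nat.coprime_mul_iff_right, Nat.coprime_comm (m := k), hk.coprime_iff_not_dvd, and_assoc]

lemma abs_card_squarefreeCoprimeUpTo_mul_sub_le {k q : ℕ} (hk : k.Prime) (hkq : ¬ k ∣ q)
    {c C : ℝ} (hc : 0 ≤ c) (hcC : c ≤ C)
    (h : ∀ Z, 0 ≤ Z → |(#(squarefreeCoprimeUpTo q Z) : ℝ) - c * Z| ≤ C * √Z) {Z : ℝ}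
    (hZ : 0 ≤ Z) :
    |(#(squarefreeCoprimeUpTo (q * k) Z) : ℝ) - c * k / (k + 1) * Z| ≤ 4 * C * √Z :=
  abs_sub_le_of_add_comp_div (f := fun Z ↦ (#(squarefreeCoprimeUpTo (q * k) Z) : ℝ))
    (g := fun Z ↦ (#(squarefreeCoprimeUpTo q Z) : ℝ)) (mod_cast hk.two_le) hc hcC
    (fun Z ↦ by exact_mod_cast card_squarefreeCoprimeUpTo_mul_add_div hk hkq Z)
    (fun Z hZ ↦ by simp [squarefreeCoprimeUpTo, upTo_of_lt_one _ hZ]) h hZ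

lemma abs_card_squarefreeCoprimeUpTo_two_sub_le {Z : ℝ} (hZ : 0 ≤ Z) :
    |(#(squarefreeCoprimeUpTo 2 Z) : ℝ) - 4 / π ^ 2 * Z| ≤ 16 * √Z := by
  have := abs_card_squarefreeCoprimeUpTo_mul_sub_le Nat.prime_two (by norm_num)
    (by positivity) (six_div_pi_sq_le_one.trans (by norm_num))
    (fun Z hZ ↦ abs_card_squarefreeCoprimeUpTo_one_sub_le hZ) hZ
  rw [one_mul] at this
  convert this using 3 <;> push_cast <;> ring

lemma abs_card_squarefreeCoprimeUpTo_two_mul_sub_le {p : ℕ} (hp : p.Prime) (hp2 : p ≠ 2)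
    {Z : ℝ} (hZ : 0 ≤ Z) :
    |(#(squarefreeCoprimeUpTo (2 * p) Z) : ℝ) - 4 / π ^ 2 * p / (p + 1) * Z| ≤ 64 * √Z := by
  have h4 : 4 / π ^ 2 ≤ 16 := (div_le_div_of_nonneg_right (by norm_num) (sq_nonneg π)).trans
    (six_div_pi_sq_le_one.trans (by norm_num))
  have := abs_card_squarefreeCoprimeUpTo_mul_sub_le hp
    (fun h ↦ hp2 ((Nat.prime_dvd_prime_iff_eq hp Nat.prime_two).mp h)) (by positivity) h4
    (fun Z hZ ↦ abs_card_squarefreeCoprimeUpTo_two_sub_le hZ) hZ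
  convert this using 2
  ring

lemma setOf_natAbs_mem_eq (s : Finset ℕ) :
    {f : ℤ | f.natAbs ∈ s} = (Nat.cast '' s) ∪ ((fun n : ℕ ↦ -(n : ℤ)) '' s) := by
  ext f
  simp only [Set.mem_ofPred_eq, Set.mem_union, Set.mem_image, mem_coe]
  constructor
  · intro hf
    rcases Int.natAbs_eq f with h | h
    · exact .inl ⟨_, hf, h.symm⟩
    · exact .inr ⟨_, hf, h.symm⟩
  · rintro (⟨n, hn, rfl⟩ | ⟨n, hn, rfl⟩) <;> simpa using hn

lemma finite_setOf_natAbs_mem (s : Finset ℕ) : {f : ℤ | f.natAbs ∈ s}.Finite := by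
  rw [setOf_natAbs_mem_eq]
  exact (s.finite_toSet.image _).union (s.finite_toSet.image _)

lemma ncard_setOf_natAbs_mem {s : Finset ℕ} (hs : 0 ∉ s) :
    {f : ℤ | f.natAbs ∈ s}.ncard = 2 * #s := by
  rw [setOf_natAbs_mem_eq,
    Set.ncard_union_eq _ (s.finite_toSet.image _) (s.finite_toSet.image _),
    Set.ncard_image_of_injective _ Nat.cast_injective,
    Set.ncard_image_of_injective (f := fun n : ℕ ↦ -(n : ℤ)) _
      (neg_injective.comp Nat.cast_injective), Set.ncard_coe_finset, two_mul]
  · rw [Set.disjoint_left]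
    rintro _ ⟨m, hm, rfl⟩ ⟨n, hn, h⟩
    have : m ≠ 0 := fun h ↦ hs (h ▸ hm)
    beta_reduce at h
    omega

/-- An odd `f` is determined by `|f|` and `f mod 4`. -/
lemma ncard_setOf_emod_four_natAbs_mem {r : ℤ} (hr : r = 1 ∨ r = 3) {s : Finset ℕ}
    (hs : ∀ n ∈ s, Odd n) : {f : ℤ | f % 4 = r ∧ f.natAbs ∈ s}.ncard = #s := by
  have hinj : Set.InjOn Int.natAbs {f : ℤ | f % 4 = r ∧ f.natAbs ∈ s} := by
    rintro a ⟨ha, -⟩ b ⟨hb, -⟩ hab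
    rcases Int.natAbs_eq_natAbs_iff.mp hab with h | h
    · exact h
    · omega
  have himage : Int.natAbs '' {f : ℤ | f % 4 = r ∧ f.natAbs ∈ s} = s := by
    ext n
    simp only [Set.mem_image, Set.mem_ofPred_eq, mem_coe]
    refine ⟨fun ⟨f, ⟨_, hf⟩, hfn⟩ ↦ hfn ▸ hf, fun hn ↦ ?_⟩
    have hodd := Nat.odd_iff.mp (hs n hn)
    by_cases hn4 : (n : ℤ) % 4 = r
    · exact ⟨n, ⟨hn4, hn⟩, rfl⟩
    · exact ⟨-n, ⟨by omega, by simpa using hn⟩, by simp⟩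
  rw [← hinj.ncard_image, himage, Set.ncard_coe_finset]

lemma natAbs_mem_upTo {P : ℕ → Prop} {Z : ℝ} {f : ℤ} :
    f.natAbs ∈ upTo P Z ↔ f ≠ 0 ∧ |(f : ℝ)| ≤ Z ∧ P f.natAbs := by
  rw [mem_upTo, Int.natAbs_pos, Nat.cast_natAbs, Int.cast_abs]

lemma coprime_two_natAbs {f : ℤ} : f.natAbs.Coprime 2 ↔ f % 2 = 1 := by
  rw [Nat.coprime_two_right, Int.natAbs_odd, Int.odd_iff]

lemma Int.emod_four_eq_two_iff_of_squarefree {m : ℤ} (hm : Squarefree m) :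
    m % 4 = 2 ↔ 2 ∣ m := by
  refine ⟨fun h ↦ by omega, fun h ↦ ?_⟩
  have : ¬ 2 * 2 ∣ m := fun h4 ↦ by simpa [Int.isUnit_iff] using hm 2 h4
  omega

lemma abs_four_mul_le_iff {m : ℤ} {X : ℝ} :
    |((4 * m : ℤ) : ℝ)| ≤ X ↔ |(m : ℝ)| ≤ X / 4 := by
  rw [Int.cast_mul, abs_mul, le_div_iff₀ (by norm_num)]
  norm_num [mul_comm]

def fundamentalDiscriminantsDvd (p : ℕ) (X : ℝ) : Set ℤ :=
  {f : ℤ | IsFundamentalDiscriminant f ∧ 0 < |f| ∧ |(f : ℝ)| ≤ X ∧ (p : ℤ) ∣ f}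

lemma fundamentalDiscriminantsDvd_eq (p : ℕ) (X : ℝ) :
    fundamentalDiscriminantsDvd p X =
      {f | f % 4 = 1 ∧
          f.natAbs ∈ upTo (fun n ↦ (Squarefree n ∧ n.Coprime 2) ∧ p ∣ n) X} ∪
        (4 * ·) '' ({m | m.natAbs ∈ upTo (fun n ↦ Squarefree n ∧ 2 ∣ n ∧ p ∣ 4 * n) (X / 4)} ∪
          {m | m % 4 = 3 ∧
            m.natAbs ∈ upTo (fun n ↦ (Squarefree n ∧ n.Coprime 2) ∧ p ∣ 4 * n) (X / 4)}) := by
  have hdvd4 : ∀ m : ℤ, p ∣ 4 * m.natAbs ↔ (p : ℤ) ∣ 4 * m := fun m ↦ by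
    rw [Int.natCast_dvd, Int.natAbs_mul]
    rfl
  have htwo : ∀ m : ℤ, 2 ∣ m.natAbs ↔ 2 ∣ m := fun m ↦ by
    rw [← Int.natCast_dvd]
    rfl
  ext f
  simp only [fundamentalDiscriminantsDvd, Set.mem_ofPred_eq, Set.mem_union, Set.mem_image,
    natAbs_mem_upTo, Int.squarefree_natAbs, coprime_two_natAbs, ← Int.natCast_dvd, hdvd4, htwo,
    abs_pos, IsFundamentalDiscriminant]
  constructor
  · rintro ⟨⟨h1, hsf⟩ | ⟨m, rfl, hsf, hm⟩, hf0, hX, hp⟩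
    · exact .inl ⟨h1, hf0, hX, ⟨hsf, by omega⟩, hp⟩
    · refine .inr ⟨m, ?_, rfl⟩
      rw [abs_four_mul_le_iff] at hX
      rcases hm with hm | hm
      · exact .inl ⟨by omega, hX, hsf, (Int.emod_four_eq_two_iff_of_squarefree hsf).mp hm, hp⟩
      · exact .inr ⟨hm, by omega, hX, ⟨hsf, by omega⟩, hp⟩
  · rintro (⟨h1, hf0, hX, ⟨hsf, -⟩, hp⟩ | ⟨m, hm, rfl⟩)
    · exact ⟨.inl ⟨h1, hsf⟩, hf0, hX, hp⟩
    rw [abs_four_mul_le_iff]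
    rcases hm with ⟨hm0, hX, hsf, h2, hp⟩ | ⟨h3, hm0, hX, ⟨hsf, -⟩, hp⟩
    · exact ⟨.inr ⟨m, rfl, hsf, .inl ((Int.emod_four_eq_two_iff_of_squarefree hsf).mpr h2)⟩,
        by omega, hX, hp⟩
    · exact ⟨.inr ⟨m, rfl, hsf, .inr h3⟩, by omega, hX, hp⟩

lemma ncard_fundamentalDiscriminantsDvd (p : ℕ) (X : ℝ) :
    (fundamentalDiscriminantsDvd p X).ncard =
      #(upTo (fun n ↦ (Squarefree n ∧ n.Coprime 2) ∧ p ∣ n) X) +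
      2 * #(upTo (fun n ↦ Squarefree n ∧ 2 ∣ n ∧ p ∣ 4 * n) (X / 4)) +
      #(upTo (fun n ↦ (Squarefree n ∧ n.Coprime 2) ∧ p ∣ 4 * n) (X / 4)) := by
  set s₁ := upTo (fun n ↦ (Squarefree n ∧ n.Coprime 2) ∧ p ∣ n) X
  set s₂ := upTo (fun n ↦ Squarefree n ∧ 2 ∣ n ∧ p ∣ 4 * n) (X / 4)
  set s₃ := upTo (fun n ↦ (Squarefree n ∧ n.Coprime 2) ∧ p ∣ 4 * n) (X / 4)
  have hodd :
      ∀ {P : ℕ → Prop} {Z : ℝ}, (∀ n, P n → n.Coprime 2) → ∀ n ∈ upTo P Z, Odd n :=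
    fun hP n hn ↦ Nat.coprime_two_right.mp (hP n (mem_upTo.mp hn).2.2)
  have hfin₁ : {f : ℤ | f % 4 = 1 ∧ f.natAbs ∈ s₁}.Finite :=
    (finite_setOf_natAbs_mem s₁).subset fun _ hf ↦ hf.2
  have hfin₃ : {m : ℤ | m % 4 = 3 ∧ m.natAbs ∈ s₃}.Finite :=
    (finite_setOf_natAbs_mem s₃).subset fun _ hf ↦ hf.2
  rw [fundamentalDiscriminantsDvd_eq, Set.ncard_union_eq _ hfin₁
    (((finite_setOf_natAbs_mem s₂).union hfin₃).image _),
    Set.ncard_image_of_injective _ (mul_right_injective₀ four_ne_zero),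
    Set.ncard_union_eq _ (finite_setOf_natAbs_mem s₂) hfin₃,
    ncard_setOf_emod_four_natAbs_mem (.inl rfl) (hodd fun _ h ↦ h.1.2),
    ncard_setOf_natAbs_mem fun h ↦ (mem_upTo.mp h).1.false,
    ncard_setOf_emod_four_natAbs_mem (.inr rfl) (hodd fun _ h ↦ h.1.2), add_assoc]
  · rw [Set.disjoint_left]
    rintro m h₂ ⟨h₃, -⟩
    have : (2 : ℤ) ∣ m := Int.natCast_dvd.mpr (mem_upTo.mp h₂).2.2.2.1
    omega
  · rw [Set.disjoint_left]
    rintro f ⟨h₁, -⟩ ⟨m, -, rfl⟩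
    beta_reduce at h₁
    omega

lemma ncard_fundamentalDiscriminantsDvd_two (X : ℝ) :
    (fundamentalDiscriminantsDvd 2 X).ncard =
      2 * #(squarefreeCoprimeUpTo 2 (X / 4 / 2)) + #(squarefreeCoprimeUpTo 2 (X / 4)) := by
  have h₁ : upTo (fun n ↦ (Squarefree n ∧ n.Coprime 2) ∧ 2 ∣ n) X = ∅ := by
    refine eq_empty_of_forall_notMem fun n hn ↦ ?_
    obtain ⟨-, -, ⟨-, hodd⟩, heven⟩ := mem_upTo.mp hn
    exact (Nat.coprime_two_right.mp hodd).not_two_dvd_nat heven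
  have h₂ : #(upTo (fun n ↦ Squarefree n ∧ 2 ∣ n ∧ 2 ∣ 4 * n) (X / 4)) =
      #(squarefreeCoprimeUpTo 2 (X / 4 / 2)) := by
    rw [upTo_congr (Q := fun n ↦ (Squarefree n ∧ n.Coprime 1) ∧ 2 ∣ n) (fun n _ ↦ by
      rw [Nat.coprime_one_right_eq_true, and_true,
        and_iff_left ((by norm_num : 2 ∣ 4).mul_right n)]) _,
      card_upTo_squarefree_coprime_dvd Nat.squarefree_two (Nat.coprime_one_right 2), one_mul,
      Nat.cast_ofNat]
  have h₃ : upTo (fun n ↦ (Squarefree n ∧ n.Coprime 2) ∧ 2 ∣ 4 * n) (X / 4) =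
      squarefreeCoprimeUpTo 2 (X / 4) :=
    upTo_congr (fun n _ ↦ and_iff_left (Dvd.dvd.mul_right (by norm_num) n)) _
  rw [ncard_fundamentalDiscriminantsDvd, h₁, h₂, h₃, card_empty, zero_add]

lemma ncard_fundamentalDiscriminantsDvd_of_odd {p : ℕ} (hp : p.Prime) (hp2 : p ≠ 2) (X : ℝ) :
    (fundamentalDiscriminantsDvd p X).ncard =
      #(squarefreeCoprimeUpTo (2 * p) (X / p)) +
      2 * #(squarefreeCoprimeUpTo (2 * p) (X / 4 / (2 * p))) +
      #(squarefreeCoprimeUpTo (2 * p) (X / 4 / p)) := by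
  have hp2' : Nat.Coprime 2 p := (Nat.coprime_primes Nat.prime_two hp).mpr (Ne.symm hp2)
  have hdvd4 : ∀ n, p ∣ 4 * n ↔ p ∣ n := fun n ↦
    (Nat.Coprime.pow_right 2 hp2'.symm).dvd_mul_left
  have h2p : ∀ n, 2 ∣ n ∧ p ∣ n ↔ 2 * p ∣ n := fun n ↦
    ⟨fun ⟨h2, hp⟩ ↦ hp2'.mul_dvd_of_dvd_of_dvd h2 hp,
      fun h ↦ ⟨(dvd_mul_right 2 p).trans h, (dvd_mul_left p 2).trans h⟩⟩
  have h₁ := card_upTo_squarefree_coprime_dvd hp.squarefree hp2'.symm X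
  have h₂ : #(upTo (fun n ↦ Squarefree n ∧ 2 ∣ n ∧ p ∣ 4 * n) (X / 4)) =
      #(squarefreeCoprimeUpTo (2 * p) (X / 4 / (2 * p))) := by
    rw [upTo_congr (Q := fun n ↦ (Squarefree n ∧ n.Coprime 1) ∧ 2 * p ∣ n) (fun n _ ↦ by
      rw [hdvd4, Nat.coprime_one_right_eq_true, and_true, h2p]) _,
      card_upTo_squarefree_coprime_dvd (Nat.squarefree_mul_iff.mpr ⟨hp2', Nat.squarefree_two,
        hp.squarefree⟩) (Nat.coprime_one_right _), one_mul, Nat.cast_mul, Nat.cast_ofNat]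
  have h₃ : upTo (fun n ↦ (Squarefree n ∧ n.Coprime 2) ∧ p ∣ 4 * n) (X / 4) =
      upTo (fun n ↦ (Squarefree n ∧ n.Coprime 2) ∧ p ∣ n) (X / 4) :=
    upTo_congr (fun n _ ↦ by rw [hdvd4]) _
  rw [ncard_fundamentalDiscriminantsDvd, h₁, h₂, h₃,
    card_upTo_squarefree_coprime_dvd hp.squarefree hp2'.symm]

lemma abs_ncard_fundamentalDiscriminantsDvd_two_sub_le {X : ℝ} (hX : 0 ≤ X) :
    |((fundamentalDiscriminantsDvd 2 X).ncard : ℝ) - 6 * X / (π ^ 2 * (2 + 1))| ≤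
      256 * √(X / 2) := by
  rw [ncard_fundamentalDiscriminantsDvd_two]
  push_cast
  have h₁ := abs_card_squarefreeCoprimeUpTo_two_sub_le (Z := X / 4 / 2) (by positivity)
  have h₂ := abs_card_squarefreeCoprimeUpTo_two_sub_le (Z := X / 4) (by positivity)
  have hs₁ : √(X / 4 / 2) ≤ √(X / 2) := Real.sqrt_le_sqrt (by linarith)
  have hs₂ : √(X / 4) ≤ √(X / 2) := Real.sqrt_le_sqrt (by linarith)
  have hmain :
      2 * (4 / π ^ 2 * (X / 4 / 2)) + 4 / π ^ 2 * (X / 4) = 6 * X / (π ^ 2 * (2 + 1)) := by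
    field_simp
    ring
  rw [abs_le] at h₁ h₂ ⊢
  constructor <;> linarith [Real.sqrt_nonneg (X / 2)]

lemma abs_ncard_fundamentalDiscriminantsDvd_sub_le_of_odd {p : ℕ} (hp : p.Prime) (hp2 : p ≠ 2)
    {X : ℝ} (hX : 0 ≤ X) :
    |((fundamentalDiscriminantsDvd p X).ncard : ℝ) - 6 * X / (π ^ 2 * (p + 1))| ≤
      256 * √(X / p) := by
  have hp0 : (0 : ℝ) < p := mod_cast hp.pos
  rw [ncard_fundamentalDiscriminantsDvd_of_odd hp hp2]
  push_cast
  have h₁ := abs_card_squarefreeCoprimeUpTo_two_mul_sub_le hp hp2 (Z := X / p) (by positivity)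
  have h₂ := abs_card_squarefreeCoprimeUpTo_two_mul_sub_le hp hp2 (Z := X / 4 / (2 * p))
    (by positivity)
  have h₃ := abs_card_squarefreeCoprimeUpTo_two_mul_sub_le hp hp2 (Z := X / 4 / p) (by positivity)
  have hs₂ : √(X / 4 / (2 * p)) ≤ √(X / p) := Real.sqrt_le_sqrt <| by
    rw [div_div]
    exact div_le_div_of_nonneg_left hX hp0 (by linarith)
  have hs₃ : √(X / 4 / p) ≤ √(X / p) := Real.sqrt_le_sqrt <| by
    rw [div_div]
    exact div_le_div_of_nonneg_left hX hp0 (by linarith)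
  have hmain : 4 / π ^ 2 * p / (p + 1) * (X / p) +
      2 * (4 / π ^ 2 * p / (p + 1) * (X / 4 / (2 * p))) + 4 / π ^ 2 * p / (p + 1) * (X / 4 / p) =
        6 * X / (π ^ 2 * (p + 1)) := by
    field_simp
    ring
  rw [abs_le] at h₁ h₂ h₃ ⊢
  constructor <;> linarith [Real.sqrt_nonneg (X / p)]

lemma abs_ncard_fundamentalDiscriminantsDvd_sub_le {p : ℕ} (hp : p.Prime) {X : ℝ}
    (hX : 0 ≤ X) :
    |((fundamentalDiscriminantsDvd p X).ncard : ℝ) - 6 * X / (π ^ 2 * (p + 1))| ≤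
      256 * √(X / p) := by
  obtain rfl | hp2 := eq_or_ne p 2
  · simpa only [Nat.cast_ofNat] using abs_ncard_fundamentalDiscriminantsDvd_two_sub_le hX
  · exact abs_ncard_fundamentalDiscriminantsDvd_sub_le_of_odd hp hp2 hX

/-- For every prime `p` and `X ≥ 1`, the number of fundamental
discriminants `f` with `0 < |f| ≤ X` and `p ∣ f` is `6X/(π²(p+1)) + O((X/p)^{1/2})`,
with a universal constant. -/
theorem count_fundamental_discriminants_dvd :
    ∃ C : ℝ, 0 < C ∧ ∀ p : ℕ, p.Prime → ∀ X : ℝ, 1 ≤ X →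
      |(({f : ℤ | IsFundamentalDiscriminant f ∧ 0 < |f| ∧ |(f : ℝ)| ≤ X ∧
            (p : ℤ) ∣ f}.ncard : ℝ))
          - 6 * X / (Real.pi ^ 2 * ((p : ℝ) + 1))| ≤ C * (X / p) ^ ((1 : ℝ) / 2) := by
  refine ⟨256, by norm_num, fun p hp X hX ↦ ?_⟩
  rw [← Real.sqrt_eq_rpow]
  exact abs_ncard_fundamentalDiscriminantsDvd_sub_le hp (by linarith)
end

section
/- There exists a constant C > 0 such that for every positive integer n having at least two distinct prime factors, ∏_{q | n, q prime} (1 + 1/q) ≤ C·log(ω(n)), where ω(n) denotes the number of distinct prime factors of n. Equivalently, ∏_{q | n, q prime} (1 − 1/(q+1))^{−1} ≪ log(ω(n)) with a universal implied constant. -/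
/-!
Partial summation of Mertens' estimate `∑_{p ≤ N} log p / p ≤ log N + log 4` against the weights
`1 / log n` gives `∑_{p ≤ N} 1 / p ≤ log log N + O(1)` with leading coefficient exactly one, which
is what survives exponentiation. For a set `S` of `k ≥ 2` primes, those above `k²` contribute at
most `1 / k`, so `∑_{q ∈ S} 1 / q ≤ log log k + O(1)`, and `1 + x ≤ eˣ` turns this into
`∏_{q ∈ S} (1 + 1 / q) ≤ e^{O(1)} log k`.
-/

open Nat hiding log
open Finset Real
open scoped Nat

theorem Nat.div_le_factorization_factorial {p : ℕ} (hp : p.Prime) (N : ℕ) :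
    N / p ≤ (N)!.factorization p := by
  calc N / p ≤ (p * (N / p))!.factorization p := by
        rw [factorization_factorial_mul hp]; exact Nat.le_add_left _ _
    _ ≤ (N)!.factorization p :=
        factorization_le_factorization_of_dvd_right
          (factorial_dvd_factorial (Nat.mul_div_le N p)) (factorial_ne_zero _) (factorial_ne_zero _)

theorem sum_primesLE_div_mul_log_le_log_factorial (N : ℕ) :
    ∑ p ∈ primesLE N, ((N / p : ℕ) : ℝ) * log p ≤ log ((N)! : ℕ) := by
  have hsupp : ((N)!).factorization.support ⊆ primesLE N := fun p hp ↦ by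
    rw [Nat.support_factorization, mem_primeFactors] at hp
    exact mem_primesLE.2 ⟨hp.1.dvd_factorial.1 hp.2.1, hp.1⟩
  rw [log_nat_eq_sum_factorization, Finsupp.sum_of_support_subset _ hsupp _ (by simp)]
  gcongr with p hp
  exact_mod_cast div_le_factorization_factorial (prime_of_mem_primesLE hp) N

theorem log_factorial_le_mul_log (N : ℕ) : log ((N)! : ℕ) ≤ N * log N := by
  rcases N.eq_zero_or_pos with rfl | hN
  · simp
  calc log ((N)! : ℕ) ≤ log ((N ^ N : ℕ) : ℝ) :=
        log_le_log (by exact_mod_cast factorial_pos N) (by exact_mod_cast factorial_le_pow N)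
    _ = N * log N := by push_cast; exact log_pow N N

theorem sum_primesLE_log_div_le {N : ℕ} (hN : 1 ≤ N) :
    ∑ p ∈ primesLE N, log p / p ≤ log N + log 4 := by
  have hN0 : (0 : ℝ) < N := by exact_mod_cast hN
  suffices N * ∑ p ∈ primesLE N, log p / p ≤ N * (log N + log 4) from le_of_mul_le_mul_left this hN0
  calc N * ∑ p ∈ primesLE N, log p / p = ∑ p ∈ primesLE N, (N : ℝ) / p * log p := by
        rw [mul_sum]; exact sum_congr rfl fun _ _ ↦ by ring
    _ ≤ ∑ p ∈ primesLE N, (((N / p : ℕ) : ℝ) + 1) * log p := by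
        gcongr with p
        rw [← Nat.floor_div_eq_div (K := ℝ)]
        exact (lt_floor_add_one _).le
    _ = ∑ p ∈ primesLE N, ((N / p : ℕ) : ℝ) * log p + Chebyshev.theta N := by
        rw [Chebyshev.theta_eq_sum_primesLE_log, ← sum_add_distrib]
        exact sum_congr rfl fun _ _ ↦ by ring
    _ ≤ N * log N + log 4 * N :=
        add_le_add
          ((sum_primesLE_div_mul_log_le_log_factorial N).trans (log_factorial_le_mul_log N))
          (Chebyshev.theta_le_log4_mul_x N.cast_nonneg)
    _ = N * (log N + log 4) := by ring

theorem one_sub_div_le_log_sub_log {a b : ℝ} (ha : 0 < a) (hb : 0 < b) :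
    1 - a / b ≤ log b - log a := by
  simpa [inv_div, log_div hb.ne' ha.ne'] using one_sub_inv_le_log_of_pos (div_pos hb ha)

theorem sum_primesLE_succ {M : Type*} [AddCommMonoid M] (f : ℕ → M) (N : ℕ) :
    ∑ p ∈ primesLE (N + 1), f p =
      ∑ p ∈ primesLE N, f p + if (N + 1).Prime then f (N + 1) else 0 := by
  rw [primesLE_succ]
  split_ifs
  · rw [sum_insert fun h ↦ (le_of_mem_primesLE h).not_gt N.lt_succ_self, add_comm]
  · rw [add_zero]

/-- The left side minus `log (log N)` does not increase with `N`: the step from `N` to `N + 1` is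
partial summation against `1 / log n`, bounded by `sum_primesLE_log_div_le` and the concavity of
`log`. -/
theorem sum_primesLE_inv_add_le {N : ℕ} (hN : 2 ≤ N) :
    ∑ p ∈ primesLE N, 1 / (p : ℝ) + (log 4 - ∑ p ∈ primesLE N, log p / p) / log N
      ≤ log (log N) + 2 - log (log 2) := by
  induction N, hN using Nat.le_induction with
  | base =>
    have h4 : log 4 = 2 * log 2 := by
      rw [show (4 : ℝ) = 2 ^ 2 by norm_num, Real.log_pow]; norm_num
    have hlog2 : log 2 ≠ 0 := (Real.log_pos one_lt_two).ne'
    rw [show primesLE 2 = {2} by decide]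
    simp only [sum_singleton, Nat.cast_ofNat, h4]
    field_simp
    linarith
  | succ N hN ih =>
    set G := ∑ p ∈ primesLE N, 1 / (p : ℝ)
    set F := ∑ p ∈ primesLE N, log p / p
    have hL : 0 < log N := log_pos (by exact_mod_cast hN)
    have hLL' : log N ≤ log (N + 1 : ℕ) := log_le_log (by positivity) (by gcongr; omega)
    have hL' : 0 < log (N + 1 : ℕ) := hL.trans_le hLL'
    have hF : F - log 4 ≤ log N := by linarith [sum_primesLE_log_div_le (N := N) (by omega)]
    have hstep : ∑ p ∈ primesLE (N + 1), 1 / (p : ℝ)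
        + (log 4 - ∑ p ∈ primesLE (N + 1), log p / p) / log (N + 1 : ℕ)
          = G + (log 4 - F) / log (N + 1 : ℕ) := by
      rw [sum_primesLE_succ, sum_primesLE_succ]
      split_ifs
      · field_simp; ring
      · simp only [add_zero, G, F]
    have hdiff : (log 4 - F) / log (N + 1 : ℕ) - (log 4 - F) / log N
        ≤ log (log (N + 1 : ℕ)) - log (log N) :=
      calc (log 4 - F) / log (N + 1 : ℕ) - (log 4 - F) / log N
          = (F - log 4) * (1 / log N - 1 / log (N + 1 : ℕ)) := by ring
        _ ≤ log N * (1 / log N - 1 / log (N + 1 : ℕ)) := by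
          gcongr
          exact sub_nonneg.2 (one_div_le_one_div_of_le hL hLL')
        _ = 1 - log N / log (N + 1 : ℕ) := by field_simp
        _ ≤ log (log (N + 1 : ℕ)) - log (log N) := one_sub_div_le_log_sub_log hL hL'
    rw [hstep]
    linarith

theorem sum_primesLE_inv_le {N : ℕ} (hN : 2 ≤ N) :
    ∑ p ∈ primesLE N, 1 / (p : ℝ) ≤ log (log N) + 3 - log (log 2) := by
  have hL : 0 < log N := Real.log_pos (by exact_mod_cast hN)
  have hF : -1 ≤ (log 4 - ∑ p ∈ primesLE N, log p / p) / log N := by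
    rw [le_div_iff₀ hL]; linarith [sum_primesLE_log_div_le (N := N) (by omega)]
  linarith [sum_primesLE_inv_add_le hN]

theorem sum_inv_le_log_log_card {S : Finset ℕ} (hS : ∀ q ∈ S, q.Prime) (hk : 2 ≤ #S) :
    ∑ q ∈ S, 1 / (q : ℝ) ≤ log (log #S) + (4 + log 2 - log (log 2)) := by
  set k := #S
  have hk1 : (1 : ℝ) < k := by exact_mod_cast hk
  have hsmall : ∑ q ∈ S with q ≤ k ^ 2, 1 / (q : ℝ) ≤ log (log k) + log 2 + 3 - log (log 2) :=
    calc ∑ q ∈ S with q ≤ k ^ 2, 1 / (q : ℝ) ≤ ∑ p ∈ primesLE (k ^ 2), 1 / (p : ℝ) := by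
          refine sum_le_sum_of_subset_of_nonneg (fun q hq ↦ ?_) (fun _ _ _ ↦ by positivity)
          rw [mem_filter] at hq
          exact mem_primesLE.2 ⟨hq.2, hS q hq.1⟩
      _ ≤ log (log (k ^ 2 : ℕ)) + 3 - log (log 2) := sum_primesLE_inv_le (by nlinarith)
      _ = log (log k) + log 2 + 3 - log (log 2) := by
          rw [Nat.cast_pow, Real.log_pow, log_mul (by norm_num) (Real.log_pos hk1).ne']
          push_cast; ring
  have hlarge : ∑ q ∈ S with ¬q ≤ k ^ 2, 1 / (q : ℝ) ≤ 1 :=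
    calc ∑ q ∈ S with ¬q ≤ k ^ 2, 1 / (q : ℝ) ≤ k • (1 / (k : ℝ) ^ 2) := by
          refine (sum_le_card_nsmul _ _ (1 / (k : ℝ) ^ 2) fun q hq ↦ ?_).trans ?_
          · rw [mem_filter, not_le] at hq
            gcongr
            exact_mod_cast hq.2.le
          · gcongr; exact card_filter_le _ _
      _ ≤ 1 := by
          rw [nsmul_eq_mul, mul_one_div, sq, div_mul_cancel_left₀ (by positivity)]
          exact inv_le_one_of_one_le₀ hk1.le
  rw [← sum_filter_add_sum_filter_not S (· ≤ k ^ 2)]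
  linarith

/-- There is a universal constant `C > 0` such that for every `n` with
at least two distinct prime factors, `∏_{q ∣ n prime} (1 + 1/q) ≤ C·log(ω(n))`. -/
theorem prod_one_add_inv_prime_le :
    ∃ C : ℝ, 0 < C ∧ ∀ n : ℕ, 2 ≤ n.primeFactors.card →
      ∏ q ∈ n.primeFactors, (1 + 1 / (q : ℝ)) ≤ C * Real.log (n.primeFactors.card) := by
  refine ⟨exp (4 + log 2 - log (log 2)), exp_pos _, fun n hn ↦ ?_⟩
  have hlog : 0 < log #n.primeFactors := Real.log_pos (by exact_mod_cast hn)
  calc ∏ q ∈ n.primeFactors, (1 + 1 / (q : ℝ)) ≤ exp (∑ q ∈ n.primeFactors, 1 / (q : ℝ)) :=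
        prod_one_add_le_exp_sum _ fun q ↦ by positivity
    _ ≤ exp (log (log #n.primeFactors) + (4 + log 2 - log (log 2))) :=
        exp_le_exp.2 (sum_inv_le_log_log_card (fun q ↦ prime_of_mem_primeFactors) hn)
    _ = exp (4 + log 2 - log (log 2)) * log #n.primeFactors := by
        rw [exp_add, exp_log hlog, mul_comm]
end

section
/- Let g : ℝ → ℂ be a Schwartz function with Fourier transform ĝ. Then there exists a constant C > 0 such that for all real L ≥ 1, |(1/L)·∫_0^∞ (ĝ(0) − ĝ(y/L))/sinh(y/2) dy| ≤ C/L². -/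
/-! The Fourier transform of a Schwartz function is again Schwartz, hence Lipschitz, so the
numerator is `O(y / L)`. Since `y / sinh (y / 2) ≤ 8 e^{-y/4}` is integrable on `(0, ∞)`, the
integral is `O(1 / L)`, and the prefactor `1 / L` gives `O(1 / L²)`. -/

open MeasureTheory Real
open scoped NNReal

lemma div_sinh_half_le {y : ℝ} (hy : 0 < y) : y / sinh (y / 2) ≤ 8 * exp (-(y / 4)) := by
  rw [div_le_iff₀ (sinh_pos_iff.2 (by linarith))]
  calc y ≤ 4 * exp (y / 4) - 4 * exp (-(3 * y / 4)) := by
        linarith [add_one_le_exp (y / 4), exp_le_one_iff.2 (by linarith : -(3 * y / 4) ≤ 0)]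
    _ = 8 * exp (-(y / 4)) * sinh (y / 2) := by
        rw [sinh_eq, mul_div_assoc', mul_sub, mul_assoc, mul_assoc, ← exp_add, ← exp_add]
        ring_nf

lemma integral_exp_neg_div_four_Ioi : ∫ y in Set.Ioi (0 : ℝ), exp (-(y / 4)) = 4 := by
  have h := integral_exp_mul_Ioi (a := -(1 / 4)) (by norm_num) 0
  simp only [mul_zero, exp_zero] at h
  rw [show (fun y : ℝ => exp (-(y / 4))) = fun y => exp (-(1 / 4) * y) by
    ext y; ring_nf, h]
  norm_num

lemma SchwartzMap.lipschitzWith {E F : Type*} [NormedAddCommGroup E] [NormedSpace ℝ E]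
    [NormedAddCommGroup F] [NormedSpace ℝ F] (f : SchwartzMap E F) :
    LipschitzWith (SchwartzMap.seminorm ℝ 0 1 f).toNNReal f := by
  refine lipschitzWith_of_nnnorm_fderiv_le f.differentiable fun x => ?_
  rw [← NNReal.coe_le_coe, coe_nnnorm, Real.coe_toNNReal _ (apply_nonneg _ _)]
  simpa [norm_iteratedFDeriv_one] using f.le_seminorm ℝ 0 1 x

lemma norm_integral_sub_comp_div_div_sinh_le {f : ℝ → ℂ} {K : ℝ≥0} (hf : LipschitzWith K f)
    {L : ℝ} (hL : 0 < L) :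
    ‖∫ y in Set.Ioi (0 : ℝ), (f 0 - f (y / L)) / ((sinh (y / 2) : ℝ) : ℂ)‖ ≤ 32 * K / L := by
  have hmajorant : IntegrableOn (fun y : ℝ => 8 * K / L * exp (-(y / 4))) (Set.Ioi 0) :=
    ((exp_neg_integrableOn_Ioi 0 (b := 1 / 4) (by norm_num)).congr_fun
      (fun y _ => by ring_nf) measurableSet_Ioi).const_mul _
  calc _ ≤ ∫ y in Set.Ioi (0 : ℝ), 8 * K / L * exp (-(y / 4)) := by
        refine norm_integral_le_of_norm_le hmajorant ?_
        filter_upwards [self_mem_ae_restrict measurableSet_Ioi] with y (hy : 0 < y)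
        have hsinh : 0 < sinh (y / 2) := sinh_pos_iff.2 (by linarith)
        have hlip : ‖f 0 - f (y / L)‖ ≤ K * (y / L) := by
          simpa [← dist_eq_norm, abs_of_pos hy, abs_of_pos hL] using hf.dist_le_mul 0 (y / L)
        rw [norm_div, Complex.norm_real, norm_of_nonneg hsinh.le]
        calc _ ≤ K * (y / L) / sinh (y / 2) := by gcongr
          _ = K / L * (y / sinh (y / 2)) := by ring
          _ ≤ K / L * (8 * exp (-(y / 4))) := by gcongr; exact div_sinh_half_le hy
          _ = _ := by ring
    _ = 32 * K / L := by rw [integral_const_mul, integral_exp_neg_div_four_Ioi]; ring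

/-- For a Schwartz function `g : ℝ → ℂ` there is `C > 0` such that for
all `L ≥ 1`, `|(1/L)·∫_0^∞ (ĝ(0) − ĝ(y/L))/sinh(y/2) dy| ≤ C/L²`. -/
theorem gamma_term_estimate (g : SchwartzMap ℝ ℂ) :
    ∃ C : ℝ, 0 < C ∧ ∀ L : ℝ, 1 ≤ L →
      ‖(1 / (L : ℂ)) * ∫ y in Set.Ioi (0 : ℝ),
          (FourierTransform.fourier (g : ℝ → ℂ) 0 - FourierTransform.fourier (g : ℝ → ℂ) (y / L)) /
            ((Real.sinh (y / 2) : ℝ) : ℂ)‖ ≤ C / L ^ 2 := by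
  set K := (SchwartzMap.seminorm ℝ 0 1 (SchwartzMap.fourierTransformCLM ℂ g)).toNNReal
  have hlip : LipschitzWith K (FourierTransform.fourier (g : ℝ → ℂ)) :=
    (SchwartzMap.fourierTransformCLM ℂ g).lipschitzWith
  refine ⟨32 * K + 1, by positivity, fun L hL => ?_⟩
  have hL0 : 0 < L := by linarith
  rw [norm_mul, norm_div, norm_one, Complex.norm_real, norm_of_nonneg hL0.le]
  calc _ ≤ 1 / L * (32 * K / L) := by
        gcongr; exact norm_integral_sub_comp_div_div_sinh_le hlip hL0
    _ = 32 * K / L ^ 2 := by ring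
    _ ≤ (32 * K + 1) / L ^ 2 := by gcongr; linarith
end

section
/- The series ∑_p log(p)/(p² − 1), summed over all primes p, converges and equals −ζ'(2)/ζ(2), where ζ is the Riemann zeta function and ζ' its derivative. -/
/-!
Since `Λ` is supported on prime powers with `Λ (p ^ (k + 1)) = log p`, the Dirichlet series
`∑ Λ(n) n⁻ˢ = -ζ'(s)/ζ(s)` regroups, prime by prime, into the geometric series
`log p · ∑_{k ≥ 1} p^{-ks} = log p / (p^s - 1)`.
-/

open ArithmeticFunction Complex
open scoped LSeries.notation

theorem Nat.Primes.hasSum_pow_succ_iff {α : Type*} [AddCommMonoid α] [TopologicalSpace α]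
    {f : ℕ → α} {a : α} (hf : ∀ n, ¬IsPrimePow n → f n = 0) :
    HasSum (fun pk : Nat.Primes × ℕ => f ((pk.1 : ℕ) ^ (pk.2 + 1))) a ↔ HasSum f a := by
  have hinj : Function.Injective (Subtype.val ∘ Nat.Primes.prodNatEquiv) :=
    Subtype.val_injective.comp Nat.Primes.prodNatEquiv.injective
  refine hinj.hasSum_iff fun n hn => hf n fun hpow => hn ?_
  exact ⟨Nat.Primes.prodNatEquiv.symm ⟨n, hpow⟩,
    by simp only [Function.comp_apply, Equiv.apply_symm_apply]⟩

theorem LSeries.term_vonMangoldt_prime_pow_succ (p : Nat.Primes) (s : ℂ) (k : ℕ) :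
    LSeries.term ↗Λ s ((p : ℕ) ^ (k + 1)) =
      Real.log (p : ℕ) * (((p : ℕ) : ℂ) ^ s)⁻¹ ^ (k + 1) := by
  rw [LSeries.term_def, if_neg (pow_ne_zero _ p.prop.ne_zero),
    vonMangoldt_apply_pow k.succ_ne_zero, vonMangoldt_apply_prime p.prop, Nat.cast_pow,
    ← natCast_cpow_natCast_mul, mul_comm, cpow_mul_nat, div_eq_mul_inv, inv_pow]

theorem LSeries.hasSum_term_vonMangoldt_prime_pow_succ (p : Nat.Primes) {s : ℂ} (hs : 0 < s.re) :
    HasSum (fun k => LSeries.term ↗Λ s ((p : ℕ) ^ (k + 1)))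
      (Real.log (p : ℕ) / (((p : ℕ) : ℂ) ^ s - 1)) := by
  set r : ℂ := (((p : ℕ) : ℂ) ^ s)⁻¹
  have hps : ((p : ℕ) : ℂ) ^ s ≠ 0 := by simp [p.prop.ne_zero]
  have hr : ‖r‖ < 1 := by
    have hp : (1 : ℝ) < (p : ℕ) := by exact_mod_cast p.prop.one_lt
    rw [norm_inv, norm_natCast_cpow_of_pos p.prop.pos,
      inv_lt_one₀ (Real.rpow_pos_of_pos (by linarith) _)]
    exact Real.one_lt_rpow hp hs
  have hgeom : HasSum (fun k : ℕ => r ^ (k + 1)) (r / (1 - r)) := by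
    simpa only [pow_succ', div_eq_mul_inv] using (hasSum_geometric_of_norm_lt_one hr).mul_left r
  have hsum : r / (1 - r) = (((p : ℕ) : ℂ) ^ s - 1)⁻¹ := by
    simp only [r]
    field_simp
  simp only [LSeries.term_vonMangoldt_prime_pow_succ]
  rw [div_eq_mul_inv, ← hsum]
  exact hgeom.mul_left _

theorem hasSum_log_div_cpow_sub_one {s : ℂ} (hs : 1 < s.re) :
    HasSum (fun p : Nat.Primes => (Real.log (p : ℕ) : ℂ) / (((p : ℕ) : ℂ) ^ s - 1))
      (-(deriv riemannZeta s / riemannZeta s)) := by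
  have hL : HasSum (LSeries.term ↗Λ s) (-(deriv riemannZeta s / riemannZeta s)) := by
    rw [neg_div', ← LSeries_vonMangoldt_eq_deriv_riemannZeta_div hs]
    exact (LSeriesSummable_vonMangoldt hs).hasSum
  have hsupp (n : ℕ) (hn : ¬IsPrimePow n) : LSeries.term ↗Λ s n = 0 := by
    simp [LSeries.term, vonMangoldt_eq_zero_iff.mpr hn]
  exact ((Nat.Primes.hasSum_pow_succ_iff hsupp).mpr hL).prod_fiberwise fun p =>
    LSeries.hasSum_term_vonMangoldt_prime_pow_succ p (by linarith)

/-- `∑_p log p/(p² − 1) = −ζ'(2)/ζ(2)`, the sum (over all primes)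
converging. -/
theorem hasSum_log_div_sq_sub_one :
    HasSum (fun p : Nat.Primes => (Real.log (p : ℕ) : ℂ) / (((p : ℕ) : ℂ) ^ 2 - 1))
      (-(deriv riemannZeta 2 / riemannZeta 2)) := by
  simpa only [cpow_ofNat] using hasSum_log_div_cpow_sub_one (s := 2) (by norm_num)
end

section
/- There exists a constant C > 0 such that for every positive integer D and every real X ≥ 1: |∑_{f ∈ F(X), f odd} χ₈(f)| ≤ C·τ(D)·X^{1/2}, where χ₈ is the real character modulo 8 with χ₈(n) = 1 if n ≡ ±1 (mod 8), χ₈(n) = −1 if n ≡ ±3 (mod 8), and χ₈(n) = 0 if n is even, and τ(D) denotes the number of positive divisors of D. (For odd f, χ₈(f) is the value χ_f(2) of the quadratic character attached to the fundamental discriminant f at the prime 2.) -/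
/-- `F(X)`: the set of fundamental discriminants `f` with `gcd(f, D) = 1` and
`X ≤ |f| < 2X`. -/
def FSet (D : ℕ) (X : ℝ) : Set ℤ :=
  {f | IsFundamentalDiscriminant f ∧ IsCoprime f (D : ℤ) ∧
    X ≤ |(f : ℝ)| ∧ |(f : ℝ)| < 2 * X}

/-- The real character modulo `8`: `χ₈(n) = 1` if `n ≡ ±1 (mod 8)`, `−1` if
`n ≡ ±3 (mod 8)`, and `0` if `n` is even. -/
def chi8 (n : ℤ) : ℤ :=
  if n % 8 = 1 ∨ n % 8 = 7 then 1 else if n % 8 = 3 ∨ n % 8 = 5 then -1 else 0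

/-!
An odd fundamental discriminant is a squarefree `f ≡ 1 (mod 4)`. Squarefreeness and coprimality
to `D` are detected by the Möbius sums `∑_{d² ∣ f} μ(d)` and `∑_{e ∣ (f, D)} μ(e)`, in which only
`d ≤ √(2X)` occur. After exchanging sums, each inner sum runs over the `f ≡ 1 (mod 4)` in the range
divisible by `l = lcm(d², e)`. There are none for even `l`; for odd `l` they form the single class
`l² mod 4l`, and since `4l ≡ 4 (mod 8)` the character `χ₈` alternates in sign along it, so the sum
over each of the two intervals `X ≤ ±f < 2X` is at most `1` in absolute value.
Hence the total is `≪ τ(D) √X`.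
-/

open Finset ArithmeticFunction
open scoped ArithmeticFunction.Moebius

theorem Function.Antiperiodic.sum_Ico_int {R : Type*} [Ring R] {g : ℤ → R}
    (hg : Function.Antiperiodic g 1) {m n : ℤ} (hmn : m ≤ n) :
    ∑ t ∈ Ico m n, g t = if Even (n - m) then 0 else g m := by
  induction n, hmn using Int.leInduction with
  | base => simp
  | succ n hmn ih =>
    have hgn : g n = ((n - m).negOnePow : ℤ) * g m := by
      simpa using hg.add_int_mul_eq (x := m) (n - m)
    rw [← insert_Ico_right_eq_Ico_add_one hmn, sum_insert (by simp), ih, hgn,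
      show n + 1 - m = n - m + 1 by ring]
    rcases Int.even_or_odd (n - m) with h | h <;>
      simp [h, Int.negOnePow_even, Int.negOnePow_odd, Int.not_even_iff_odd.mpr]

theorem Function.Antiperiodic.abs_sum_Ico_int_le {R : Type*} [Ring R] [LinearOrder R]
    [IsOrderedRing R] {g : ℤ → R} (hg : Function.Antiperiodic g 1) {B : R}
    (hB : ∀ x, |g x| ≤ B) (m n : ℤ) : |∑ t ∈ Ico m n, g t| ≤ B := by
  have hB0 : 0 ≤ B := (abs_nonneg _).trans (hB 0)
  rcases le_or_gt n m with hnm | hmn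
  · simpa [Ico_eq_empty_of_le hnm] using hB0
  · rw [hg.sum_Ico_int hmn.le]
    split_ifs
    · simpa using hB0
    · exact hB m

theorem Function.Antiperiodic.abs_sum_Ico_filter_modEq_le {R : Type*} [Ring R] [LinearOrder R]
    [IsOrderedRing R] {g : ℤ → R} {q : ℤ} (hg : Function.Antiperiodic g q) (hq : 0 < q) {B : R}
    (hB : ∀ x, |g x| ≤ B) (a b v : ℤ) :
    |∑ x ∈ Ico a b with x ≡ v [ZMOD q], g x| ≤ B := by
  rw [Int.Ico_filter_modEq_eq, sum_map, Int.Ico_filter_dvd_eq _ _ hq, sum_map]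
  have hg' : Function.Antiperiodic (fun t : ℤ => g (t * q + v)) 1 := fun t => by
    simp only [add_mul, one_mul, add_right_comm _ q, hg _]
  exact hg'.abs_sum_Ico_int_le (fun t => hB _) _ _

theorem abs_chi8_le_one (n : ℤ) : |chi8 n| ≤ 1 := by
  unfold chi8; split_ifs <;> simp

theorem chi8_antiperiodic {q : ℤ} (hq : q % 8 = 4) : Function.Antiperiodic chi8 q := fun x => by
  unfold chi8; split_ifs <;> omega

theorem Int.modEq_sq_iff_emod_four_eq_one_and_dvd {l : ℤ} (hl : Odd l) (f : ℤ) :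
    f ≡ l ^ 2 [ZMOD 4 * l] ↔ f % 4 = 1 ∧ l ∣ f := by
  have hcop : Nat.Coprime (4 : ℤ).natAbs l.natAbs :=
    Nat.Coprime.pow_left 2 (Nat.coprime_two_left.mpr (Int.natAbs_odd.mpr hl))
  have hl4 : l ^ 2 % 4 = 1 := by
    obtain ⟨k, rfl⟩ := hl
    rw [show (2 * k + 1) ^ 2 = 4 * (k ^ 2 + k) + 1 by ring]
    omega
  have hll : l ^ 2 ≡ 0 [ZMOD l] := Int.modEq_zero_iff_dvd.mpr (dvd_pow_self l two_ne_zero)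
  rw [← Int.modEq_and_modEq_iff_modEq_mul hcop, ← Int.modEq_zero_iff_dvd]
  exact and_congr (by rw [Int.ModEq, hl4]) ⟨fun h => h.trans hll, fun h => h.trans hll.symm⟩

theorem abs_sum_chi8_Ico_filter_dvd_le_one (l : ℕ) (a b : ℤ) :
    |∑ f ∈ Ico a b with f % 4 = 1 ∧ (l : ℤ) ∣ f, chi8 f| ≤ 1 := by
  rcases Nat.even_or_odd l with ⟨k, rfl⟩ | hl
  · rw [filter_false_of_mem fun f _ ⟨hf4, hlf⟩ => by
      have : (2 : ℤ) ∣ f := dvd_trans ⟨k, by push_cast; ring⟩ hlf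
      omega]
    simp
  · have hq : (4 * l : ℤ) % 8 = 4 := by obtain ⟨k, rfl⟩ := hl; push_cast; omega
    have hl' : Odd (l : ℤ) := (Int.odd_coe_nat l).mpr hl
    rw [← filter_congr fun f _ => Int.modEq_sq_iff_emod_four_eq_one_and_dvd hl' f]
    exact (chi8_antiperiodic hq).abs_sum_Ico_filter_modEq_le (by have := hl.pos; omega)
      abs_chi8_le_one a b _

theorem abs_sum_chi8_filter_dvd_le_two {P Q : ℤ} (hP : 0 < P) (l : ℕ) :
    |∑ f ∈ Ico P Q ∪ Ico (1 - Q) (1 - P) with f % 4 = 1 ∧ (l : ℤ) ∣ f, chi8 f| ≤ 2 := by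
  have hdisj : Disjoint (Ico P Q) (Ico (1 - Q) (1 - P)) :=
    disjoint_left.mpr fun f h₁ h₂ => by simp only [mem_Ico] at h₁ h₂; omega
  rw [filter_union, sum_union (disjoint_filter_filter hdisj)]
  calc _ ≤ _ := abs_add_le _ _
    _ ≤ 1 + 1 := add_le_add (abs_sum_chi8_Ico_filter_dvd_le_one l _ _)
        (abs_sum_chi8_Ico_filter_dvd_le_one l _ _)

theorem Nat.sq_dvd_sq_mul_iff {a b d : ℕ} (ha : Squarefree a) : d ^ 2 ∣ b ^ 2 * a ↔ d ∣ b := by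
  refine ⟨fun h => ?_, fun h => (pow_dvd_pow_of_dvd h 2).mul_right a⟩
  rcases eq_or_ne b 0 with rfl | hb
  · exact dvd_zero d
  obtain ⟨d', b', hcop, hd, hb'⟩ := Nat.exists_coprime d b
  have hg : 0 < d.gcd b := Nat.gcd_pos_of_pos_right _ (Nat.pos_of_ne_zero hb)
  generalize d.gcd b = g at hd hb' hg
  subst hd hb'
  rw [mul_pow, mul_pow, mul_right_comm, mul_dvd_mul_iff_right (by positivity)] at h
  have hd'a : d' * d' ∣ a := by rw [← sq]; exact (hcop.pow 2 2).dvd_of_dvd_mul_left h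
  rw [Nat.isUnit_iff.mp (ha d' hd'a), one_mul]
  exact dvd_mul_left g b'

theorem Nat.sum_divisors_moebius (n : ℕ) : ∑ d ∈ n.divisors, μ d = if n = 1 then 1 else 0 := by
  rw [← coe_mul_zeta_apply, moebius_mul_coe_zeta, one_apply]

theorem Nat.sum_divisors_filter_dvd_moebius {D : ℕ} (hD : D ≠ 0) (n : ℕ) :
    ∑ e ∈ D.divisors with e ∣ n, μ e = if n.Coprime D then 1 else 0 := by
  have hgcd : {e ∈ D.divisors | e ∣ n} = (n.gcd D).divisors := by
    ext e
    simp [Nat.dvd_gcd_iff, hD, and_comm]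
  rw [hgcd, Nat.sum_divisors_moebius]

theorem Nat.sum_Icc_sqrt_filter_sq_dvd_moebius {n N : ℕ} (hn : n ≠ 0) (hnN : n ≤ N) :
    ∑ d ∈ Icc 1 N.sqrt with d ^ 2 ∣ n, μ d = if Squarefree n then 1 else 0 := by
  obtain ⟨a, b, rfl, ha⟩ := Nat.sq_mul_squarefree n
  have hb : b ≠ 0 := by rintro rfl; simp at hn
  have hfilter : {d ∈ Icc 1 N.sqrt | d ^ 2 ∣ b ^ 2 * a} = b.divisors := by
    ext d
    simp only [mem_filter, mem_Icc, Nat.mem_divisors, Nat.sq_dvd_sq_mul_iff ha]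
    refine ⟨fun h => ⟨h.2, hb⟩, fun h => ⟨⟨Nat.pos_of_dvd_of_pos h.1 (Nat.pos_of_ne_zero hb), ?_⟩,
      h.1⟩⟩
    exact Nat.le_sqrt'.mpr <| (Nat.le_of_dvd (Nat.pos_of_ne_zero hn)
      ((pow_dvd_pow_of_dvd h.1 2).mul_right a)).trans hnN
  have hsq : Squarefree (b ^ 2 * a) ↔ b = 1 :=
    ⟨fun h => Nat.isUnit_iff.mp (h.of_mul_left b (by rw [sq])), by rintro rfl; simpa using ha⟩
  simp only [hfilter, Nat.sum_divisors_moebius, hsq]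

theorem Nat.ite_squarefree_and_coprime_eq_sum_moebius {n N D : ℕ} (hn : n ≠ 0) (hnN : n ≤ N)
    (hD : D ≠ 0) :
    (if Squarefree n ∧ n.Coprime D then 1 else 0 : ℤ) =
      ∑ d ∈ Icc 1 N.sqrt, ∑ e ∈ D.divisors, if (d ^ 2).lcm e ∣ n then μ d * μ e else 0 := by
  rw [← mul_one (1 : ℤ), ← ite_zero_mul_ite_zero,
    ← Nat.sum_Icc_sqrt_filter_sq_dvd_moebius hn hnN, ← Nat.sum_divisors_filter_dvd_moebius hD,
    sum_filter, sum_filter, sum_mul_sum]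
  simp only [Nat.lcm_dvd_iff, ite_zero_mul_ite_zero]

open Classical in
theorem Int.sum_filter_squarefree_isCoprime_eq_sum_moebius (g : ℤ → ℤ) {A : Finset ℤ} {D N : ℕ}
    (hD : D ≠ 0) (hA : ∀ f ∈ A, f ≠ 0 ∧ f.natAbs ≤ N) :
    ∑ f ∈ A with Squarefree f ∧ IsCoprime f (D : ℤ), g f =
      ∑ d ∈ Icc 1 N.sqrt, ∑ e ∈ D.divisors,
        μ d * μ e * ∑ f ∈ A with (((d ^ 2).lcm e : ℕ) : ℤ) ∣ f, g f := by
  have hsieve : ∀ f ∈ A, (if Squarefree f ∧ IsCoprime f (D : ℤ) then g f else 0) =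
      ∑ d ∈ Icc 1 N.sqrt, ∑ e ∈ D.divisors,
        if (((d ^ 2).lcm e : ℕ) : ℤ) ∣ f then μ d * μ e * g f else 0 := by
    intro f hf
    obtain ⟨hf0, hfN⟩ := hA f hf
    have h := Nat.ite_squarefree_and_coprime_eq_sum_moebius (Int.natAbs_ne_zero.mpr hf0) hfN hD
    have hcond :
        Squarefree f ∧ IsCoprime f (D : ℤ) ↔ Squarefree f.natAbs ∧ f.natAbs.Coprime D := by
      rw [Int.squarefree_natAbs, Int.isCoprime_iff_nat_coprime, Int.natAbs_natCast]
    simp only [hcond, Int.natCast_dvd]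
    calc _ = (if Squarefree f.natAbs ∧ f.natAbs.Coprime D then 1 else 0) * g f := by
          rw [ite_zero_mul, one_mul]
      _ = _ := by simp only [h, sum_mul, ite_zero_mul]
  rw [sum_filter, sum_congr rfl hsieve, sum_comm]
  refine sum_congr rfl fun d _ => ?_
  rw [sum_comm]
  refine sum_congr rfl fun e _ => ?_
  rw [mul_sum, sum_filter]

theorem abs_sum_sum_moebius_mul_le {I J : Finset ℕ} {T : ℕ → ℕ → ℤ} {B : ℤ}
    (hT : ∀ d ∈ I, ∀ e ∈ J, |T d e| ≤ B) :
    |∑ d ∈ I, ∑ e ∈ J, μ d * μ e * T d e| ≤ #I * #J * B := by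
  calc _ ≤ ∑ d ∈ I, ∑ e ∈ J, |μ d * μ e * T d e| :=
        (abs_sum_le_sum_abs _ _).trans (sum_le_sum fun d _ => abs_sum_le_sum_abs _ _)
    _ ≤ ∑ d ∈ I, ∑ e ∈ J, B := sum_le_sum fun d hd => sum_le_sum fun e he => by
        rw [abs_mul, abs_mul]
        calc _ ≤ 1 * 1 * |T d e| := by gcongr <;> exact abs_moebius_le_one
          _ ≤ B := by simpa using hT d hd e he
    _ = #I * #J * B := by simp [mul_assoc]

theorem Int.le_abs_cast_and_abs_cast_lt_iff_mem_Ico_union {X Y : ℝ} (hX : 0 < X) (f : ℤ) :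
    X ≤ |(f : ℝ)| ∧ |(f : ℝ)| < Y ↔ f ∈ Ico ⌈X⌉ ⌈Y⌉ ∪ Ico (1 - ⌈Y⌉) (1 - ⌈X⌉) := by
  have hX1 : 0 < ⌈X⌉ := Int.ceil_pos.mpr hX
  rw [← Int.cast_abs, ← Int.ceil_le, ← Int.lt_ceil, mem_union, mem_Ico, mem_Ico]
  rcases abs_cases f with ⟨h, _⟩ | ⟨h, _⟩ <;> rw [h] <;> omega

theorem isFundamentalDiscriminant_and_odd_iff (f : ℤ) :
    IsFundamentalDiscriminant f ∧ Odd f ↔ f % 4 = 1 ∧ Squarefree f := by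
  rw [Int.odd_iff]
  constructor
  · rintro ⟨⟨h4, hsq⟩ | ⟨m, rfl, -, -⟩, hodd⟩
    · exact ⟨h4, hsq⟩
    · omega
  · exact fun h => ⟨Or.inl h, by omega⟩

theorem Real.nat_sqrt_floor_two_mul_le {X : ℝ} (hX : 0 ≤ X) :
    ((⌊2 * X⌋₊).sqrt : ℝ) ≤ 2 * X ^ ((1 : ℝ) / 2) := by
  rw [← Real.sqrt_eq_rpow]
  calc _ ≤ √(⌊2 * X⌋₊ : ℝ) := Real.nat_sqrt_le_real_sqrt
    _ ≤ √(2 ^ 2 * X) := Real.sqrt_le_sqrt ((Nat.floor_le (by positivity)).trans (by linarith))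
    _ = 2 * √X := by rw [Real.sqrt_mul (by positivity), Real.sqrt_sq zero_le_two]

/-- There is `C > 0` such that for all `D ≥ 1` and `X ≥ 1`,
`|∑_{f ∈ F(X), f odd} χ₈(f)| ≤ C·τ(D)·X^{1/2}`. -/
theorem chi8_char_sum_fund_disc :
    ∃ C : ℝ, 0 < C ∧ ∀ (D : ℕ), 0 < D → ∀ X : ℝ, 1 ≤ X →
      |∑ᶠ f ∈ {f : ℤ | f ∈ FSet D X ∧ Odd f}, ((chi8 f : ℤ) : ℝ)|
        ≤ C * (D.divisors.card : ℝ) * X ^ ((1 : ℝ) / 2) := by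
  classical
  refine ⟨4, by norm_num, fun D hD X hX => ?_⟩
  have hX0 : 0 < X := by linarith
  set A := {f ∈ Ico ⌈X⌉ ⌈2 * X⌉ ∪ Ico (1 - ⌈2 * X⌉) (1 - ⌈X⌉) | f % 4 = 1}
  have hset : {f : ℤ | f ∈ FSet D X ∧ Odd f} = ↑{f ∈ A | Squarefree f ∧ IsCoprime f (D : ℤ)} := by
    ext f
    have hodd := isFundamentalDiscriminant_and_odd_iff f
    simp only [FSet, Set.mem_ofPred_eq, coe_filter, A, mem_filter,
      ← Int.le_abs_cast_and_abs_cast_lt_iff_mem_Ico_union hX0]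
    tauto
  have hA : ∀ f ∈ A, f ≠ 0 ∧ f.natAbs ≤ ⌊2 * X⌋₊ := by
    intro f hf
    rw [mem_filter, ← Int.le_abs_cast_and_abs_cast_lt_iff_mem_Ico_union hX0] at hf
    refine ⟨?_, Nat.le_floor ?_⟩
    · rintro rfl
      simp at hf
    · rw [Nat.cast_natAbs, Int.cast_abs]
      exact hf.1.2.le
  have hT : ∀ d e : ℕ, |∑ f ∈ A with (((d ^ 2).lcm e : ℕ) : ℤ) ∣ f, chi8 f| ≤ 2 := fun d e => by
    rw [filter_filter]
    exact abs_sum_chi8_filter_dvd_le_two (Int.ceil_pos.mpr hX0) _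
  rw [hset, finsum_mem_coe_finset, ← Int.cast_sum, ← Int.cast_abs,
    Int.sum_filter_squarefree_isCoprime_eq_sum_moebius chi8 hD.ne' hA]
  calc _ ≤ ((#(Icc 1 (⌊2 * X⌋₊).sqrt) * #D.divisors * 2 : ℤ) : ℝ) := by
        exact_mod_cast abs_sum_sum_moebius_mul_le fun d _ e _ => hT d e
    _ ≤ 4 * #D.divisors * X ^ ((1 : ℝ) / 2) := by
        rw [Nat.card_Icc, add_tsub_cancel_right]
        push_cast
        nlinarith [Real.nat_sqrt_floor_two_mul_le hX0.le,
          (Nat.cast_nonneg _ : (0 : ℝ) ≤ #D.divisors)]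
end
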